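/- arXiv:0810.5326 — 4 statements merged into one kernel-verified Lean document; each statement's English description precedes it below -/
import Mathlib

section
/- Let K be a field and H a commutative Hopf algebra over K which is finitely generated as a K-algebra. Let A be an H-comodule algebra with structure map ρ : A → A⊗H. Then the center Z of A is an H-subcomodule of A: ρ(Z) is contained in the image of Z⊗H in A⊗H. -/
/-!
STATEMENT 15: Let `H` be a commutative Hopf algebra over a field `K`, finitely
generated as a `K`-algebra, and let `A` be an `H`-comodule algebra with structure
map `ρ : A → A ⊗ H`.  Then the center `Z` of `A` is an `H`-subcomodule of `A`:
`ρ(Z)` lies in the image of `Z ⊗ H` in `A ⊗ H`.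
-/

open TensorProduct

theorem center_is_subcomodule
    (K H A : Type*) [Field K] [CommRing H] [HopfAlgebra K H] [Algebra.FiniteType K H]
    [Ring A] [Algebra K A]
    (ρ : A →ₐ[K] A ⊗[K] H)
    (h_coassoc : (TensorProduct.assoc K A H H).toLinearMap ∘ₗ
        TensorProduct.map ρ.toLinearMap (LinearMap.id (M := H)) ∘ₗ ρ.toLinearMap =
      TensorProduct.map (LinearMap.id (M := A)) (Coalgebra.comul (R := K)) ∘ₗ ρ.toLinearMap)
    (h_counit : (TensorProduct.rid K A).toLinearMap ∘ₗ
        TensorProduct.map (LinearMap.id (M := A)) (Coalgebra.counit (R := K)) ∘ₗ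
          ρ.toLinearMap = LinearMap.id) :
    ∀ z ∈ Subalgebra.center K A, ρ z ∈
      LinearMap.range
        (TensorProduct.map (Subalgebra.toSubmodule (Subalgebra.center K A)).subtype
          (LinearMap.id (M := H))) := by
  classical
  intro z hz
  set S : H →ₗ[K] H := HopfAlgebra.antipode (R := K) with hS
  -- Step 1 : elements `1 ⊗ h` are central in `A ⊗ H`
  have central_one_tmul : ∀ (h : H) (x : A ⊗[K] H),
      x * ((1 : A) ⊗ₜ[K] h) = ((1 : A) ⊗ₜ[K] h) * x := by
    intro h x
    induction x using TensorProduct.induction_on with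
    | zero => simp
    | tmul c g => simp [Algebra.TensorProduct.tmul_mul_tmul, mul_comm]
    | add u v hu hv => rw [add_mul, mul_add, hu, hv]
  -- Step 2 : `ρ z` commutes with every `ρ a`
  have hρz : ∀ a : A, ρ a * ρ z = ρ z * ρ a := by
    intro a
    rw [← map_mul, ← map_mul, Subalgebra.mem_center_iff.mp hz a]
  -- the auxiliary linear map `G`
  set m : H ⊗[K] H →ₗ[K] H := LinearMap.mul' K H ∘ₗ S.lTensor H with hm
  set G : A ⊗[K] (H ⊗[K] H) →ₗ[K] A ⊗[K] H :=
    TensorProduct.map LinearMap.id m with hGdef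
  have hG : ∀ (y : A ⊗[K] H) (h : H),
      G ((TensorProduct.assoc K A H H) (y ⊗ₜ[K] h)) = y * ((1 : A) ⊗ₜ[K] S h) := by
    intro y h
    induction y using TensorProduct.induction_on with
    | zero =>
        rw [zero_tmul, LinearEquiv.map_zero, LinearMap.map_zero, zero_mul]
    | tmul c g =>
        simp [hGdef, hm, Algebra.TensorProduct.tmul_mul_tmul]
    | add u v hu hv =>
        rw [add_tmul, map_add, map_add, hu, hv, add_mul]
  -- Step 3 : `a ⊗ 1 = G (assoc (map ρ id (ρ a)))`
  have key : ∀ a : A, (a ⊗ₜ[K] (1 : H)) * ρ z = ρ z * (a ⊗ₜ[K] (1 : H)) := by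
    intro a
    have hFa : G ((TensorProduct.assoc K A H H)
        (TensorProduct.map ρ.toLinearMap LinearMap.id (ρ a))) = a ⊗ₜ[K] (1 : H) := by
      have h1 : (TensorProduct.assoc K A H H)
          (TensorProduct.map ρ.toLinearMap LinearMap.id (ρ a))
          = TensorProduct.map LinearMap.id (Coalgebra.comul (R := K)) (ρ a) := by
        have := LinearMap.congr_fun h_coassoc a
        simpa using this
      rw [h1]
      have h2 : G ∘ₗ TensorProduct.map (LinearMap.id (M := A)) (Coalgebra.comul (R := K))
          = TensorProduct.map LinearMap.id (m ∘ₗ Coalgebra.comul) := by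
        rw [hGdef, ← TensorProduct.map_comp, LinearMap.id_comp]
      have h3 : m ∘ₗ (Coalgebra.comul (R := K) (A := H))
          = Algebra.linearMap K H ∘ₗ Coalgebra.counit := by
        rw [hm, LinearMap.comp_assoc, hS]
        exact HopfAlgebra.mul_antipode_lTensor_comul
      have h4 : TensorProduct.map (LinearMap.id (M := A))
            (Coalgebra.counit (R := K) (A := H)) (ρ a) = a ⊗ₜ[K] (1 : K) := by
        have h5 := LinearMap.congr_fun h_counit a
        simp only [LinearMap.comp_apply, LinearMap.id_apply,
          AlgHom.toLinearMap_apply, LinearEquiv.coe_coe] at h5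
        have := congrArg (TensorProduct.rid K A).symm h5
        rwa [LinearEquiv.symm_apply_apply, TensorProduct.rid_symm_apply] at this
      calc G (TensorProduct.map LinearMap.id (Coalgebra.comul (R := K)) (ρ a))
          = TensorProduct.map LinearMap.id (m ∘ₗ Coalgebra.comul) (ρ a) := by
            rw [← h2]; rfl
        _ = TensorProduct.map LinearMap.id (Algebra.linearMap K H)
              (TensorProduct.map LinearMap.id (Coalgebra.counit (R := K)) (ρ a)) := by
            have hfinal : TensorProduct.map (LinearMap.id (M := A))
                (Algebra.linearMap K H ∘ₗ Coalgebra.counit (R := K) (A := H))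
                = TensorProduct.map LinearMap.id (Algebra.linearMap K H) ∘ₗ
                  TensorProduct.map LinearMap.id Coalgebra.counit := by
              rw [← TensorProduct.map_comp, LinearMap.id_comp]
            rw [h3, hfinal, LinearMap.comp_apply]
        _ = a ⊗ₜ[K] (1 : H) := by rw [h4]; simp
    have hcomm : ∀ x : A ⊗[K] H,
        (G ((TensorProduct.assoc K A H H)
          (TensorProduct.map ρ.toLinearMap LinearMap.id x))) * ρ z
        = ρ z * (G ((TensorProduct.assoc K A H H)
          (TensorProduct.map ρ.toLinearMap LinearMap.id x))) := by
      intro x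
      induction x using TensorProduct.induction_on with
      | zero =>
          rw [LinearMap.map_zero, LinearEquiv.map_zero, LinearMap.map_zero,
            zero_mul, mul_zero]
      | tmul b h =>
          have : TensorProduct.map ρ.toLinearMap LinearMap.id (b ⊗ₜ[K] h)
              = (ρ b) ⊗ₜ[K] h := by simp
          rw [this, hG]
          rw [mul_assoc, ← central_one_tmul (S h) (ρ z), ← mul_assoc, hρz b,
            mul_assoc]
      | add u v hu hv =>
          rw [map_add, map_add, map_add, add_mul, mul_add, hu, hv]
    have h6 := hcomm (ρ a)
    rwa [hFa] at h6
  -- Step 4 : expand `ρ z` in a basis of `H`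
  set b := Module.Basis.ofVectorSpace K H with hb
  set e : A ⊗[K] H ≃ₗ[K] (Module.Basis.ofVectorSpaceIndex K H →₀ A) :=
    (TensorProduct.congr (LinearEquiv.refl K A) b.repr).trans
      (TensorProduct.finsuppScalarRight K K A _) with he
  have e_tmul : ∀ (x : A) (h : H) i, e (x ⊗ₜ[K] h) i = b.repr h i • x := by
    intro x h i
    simp [he, TensorProduct.finsuppScalarRight_apply_tmul_apply]
  have e_left : ∀ (a : A) (x : A ⊗[K] H) i,
      e ((a ⊗ₜ[K] (1 : H)) * x) i = a * e x i := by
    intro a x i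
    induction x using TensorProduct.induction_on with
    | zero => simp
    | tmul x' h =>
        rw [Algebra.TensorProduct.tmul_mul_tmul, one_mul, e_tmul, e_tmul, mul_smul_comm]
    | add u v hu hv => rw [mul_add, map_add, Finsupp.add_apply, hu, hv,
        map_add, Finsupp.add_apply, mul_add]
  have e_right : ∀ (a : A) (x : A ⊗[K] H) i,
      e (x * (a ⊗ₜ[K] (1 : H))) i = e x i * a := by
    intro a x i
    induction x using TensorProduct.induction_on with
    | zero => simp
    | tmul x' h =>
        rw [Algebra.TensorProduct.tmul_mul_tmul, mul_one, e_tmul, e_tmul, smul_mul_assoc]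
    | add u v hu hv => rw [add_mul, map_add, Finsupp.add_apply, hu, hv,
        map_add, Finsupp.add_apply, add_mul]
  set c := e (ρ z) with hc
  have hcenter : ∀ i, c i ∈ Subalgebra.center K A := by
    intro i
    rw [Subalgebra.mem_center_iff]
    intro a
    have h7 := congrArg (fun t => e t i) (key a)
    simpa [e_left, e_right, ← hc] using h7
  have hrepr : ρ z = c.sum fun i a => a ⊗ₜ[K] (b i : H) := by
    apply e.injective
    rw [map_finsuppSum]
    have hsing : ∀ i (a : A), e (a ⊗ₜ[K] (b i : H)) = Finsupp.single i a := by
      intro i a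
      ext j
      rw [e_tmul]
      simp [b.repr_self, Finsupp.single_apply, eq_comm]
    simp only [hsing]
    rw [← hc, Finsupp.sum_single]
  rw [hrepr]
  refine Submodule.sum_mem _ (fun i hi => ?_)
  exact ⟨(⟨c i, hcenter i⟩ : Subalgebra.center K A) ⊗ₜ[K] (b i : H), rfl⟩
end

section
/- Let K be a field, H a Hopf algebra over K, and Z a nonzero commutative H-comodule algebra with structure map ρ : Z → Z⊗H and coinvariant subalgebra Z' := {z ∈ Z | ρ(z) = z⊗1}. If the canonical Galois map β : Z ⊗_{Z'} Z → Z⊗H, β(a ⊗ x) = ∑ a·x₍0₎ ⊗ x₍1₎ (i.e. β = (m_Z⊗id_H)∘(id_Z⊗_{Z'}ρ)), is bijective, then H is a commutative algebra. -/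
/-!
STATEMENT 16: Let `H` be a Hopf algebra over a field `K` and `Z` a nonzero
commutative `H`-comodule algebra with structure map `ρ` and coinvariants
`Z' = {z | ρ(z) = z ⊗ 1}`.  If the canonical Galois map
`β : Z ⊗_{Z'} Z → Z ⊗ H`, `β(a ⊗ x) = (a ⊗ 1)·ρ(x)`, is bijective, then `H` is a
commutative algebra.
-/

open TensorProduct

theorem hopf_commutative_of_commutative_galois_extension
    (K H Z : Type*) [Field K] [Ring H] [HopfAlgebra K H]
    [CommRing Z] [Algebra K Z] [Nontrivial Z]
    (ρ : Z →ₐ[K] Z ⊗[K] H)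
    (h_coassoc : (TensorProduct.assoc K Z H H).toLinearMap ∘ₗ
        TensorProduct.map ρ.toLinearMap (LinearMap.id (M := H)) ∘ₗ ρ.toLinearMap =
      TensorProduct.map (LinearMap.id (M := Z)) (Coalgebra.comul (R := K)) ∘ₗ ρ.toLinearMap)
    (h_counit : (TensorProduct.rid K Z).toLinearMap ∘ₗ
        TensorProduct.map (LinearMap.id (M := Z)) (Coalgebra.counit (R := K)) ∘ₗ
          ρ.toLinearMap = LinearMap.id)
    (B : Subalgebra K Z) (hB : ∀ z : Z, z ∈ B ↔ ρ z = z ⊗ₜ[K] (1 : H))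
    (β : Z ⊗[↥B] Z →+ Z ⊗[K] H)
    (hβ : ∀ a x : Z, β (a ⊗ₜ[↥B] x) = (a ⊗ₜ[K] (1 : H)) * ρ x)
    (hbij : Function.Bijective β) :
    ∀ x y : H, x * y = y * x := by
  -- Step 1: `Z ⊗ 1` is central in `Z ⊗ H`.
  have hcent : ∀ (b : Z) (u : Z ⊗[K] H), (b ⊗ₜ[K] (1 : H)) * u = u * (b ⊗ₜ[K] (1 : H)) := by
    intro b u
    induction u using TensorProduct.induction_on with
    | zero => simp
    | tmul z h => simp [Algebra.TensorProduct.tmul_mul_tmul, mul_comm]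
    | add u v hu hv => rw [mul_add, add_mul, hu, hv]
  -- auxiliary: (a⊗1)*u*((b⊗1)*v) = ((a*b)⊗1)*(u*v)
  have haux : ∀ (a b : Z) (u v : Z ⊗[K] H),
      (a ⊗ₜ[K] (1:H)) * u * ((b ⊗ₜ[K] (1:H)) * v)
        = ((a*b) ⊗ₜ[K] (1:H)) * (u * v) := by
    intro a b u v
    rw [mul_assoc (a ⊗ₜ[K] (1:H)) u, ← mul_assoc u (b ⊗ₜ[K] (1:H)) v,
      ← hcent b u, mul_assoc (b ⊗ₜ[K] (1:H)) u v, ← mul_assoc,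
      Algebra.TensorProduct.tmul_mul_tmul, one_mul]
  -- Step 2: images of pure tensors under β commute.
  have hpure : ∀ a x b y : Z,
      β (a ⊗ₜ[↥B] x) * β (b ⊗ₜ[↥B] y) = β (b ⊗ₜ[↥B] y) * β (a ⊗ₜ[↥B] x) := by
    intro a x b y
    rw [hβ, hβ, haux a b (ρ x) (ρ y), haux b a (ρ y) (ρ x), ← map_mul, ← map_mul,
      mul_comm a b, mul_comm x y]
  -- Step 3: Z ⊗ H is commutative.
  have hcomm : ∀ u v : Z ⊗[K] H, u * v = v * u := by
    have hsurj := hbij.2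
    intro u v
    obtain ⟨s, rfl⟩ := hsurj u
    obtain ⟨t, rfl⟩ := hsurj v
    induction s using TensorProduct.induction_on with
    | zero => simp
    | add s1 s2 h1 h2 => rw [map_add, add_mul, mul_add, h1, h2]
    | tmul a x =>
      induction t using TensorProduct.induction_on with
      | zero => simp
      | add t1 t2 h1 h2 => rw [map_add, add_mul, mul_add, h1, h2]
      | tmul b y => exact hpure a x b y
  -- Step 4: deduce 1 ⊗ (x*y) = 1 ⊗ (y*x), then cancel using a dual functional.
  intro x y
  have key : (1:Z) ⊗ₜ[K] (x*y) = (1:Z) ⊗ₜ[K] (y*x) := by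
    have h2 : ((1:Z)*1) ⊗ₜ[K] (x*y) = ((1:Z)*1) ⊗ₜ[K] (y*x) := by
      rw [← Algebra.TensorProduct.tmul_mul_tmul, ← Algebra.TensorProduct.tmul_mul_tmul]
      exact hcomm _ _
    simpa using h2
  obtain ⟨φ, hφ⟩ : ∃ φ : Module.Dual K Z, φ 1 ≠ 0 := by
    by_contra h
    push_neg at h
    exact one_ne_zero ((Module.forall_dual_apply_eq_zero_iff K (1:Z)).mp h)
  have h3 := congrArg (fun u => (TensorProduct.lid K H)
      (TensorProduct.map φ (LinearMap.id (M := H)) u)) key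
  simp only [TensorProduct.map_tmul, LinearMap.id_apply, TensorProduct.lid_tmul] at h3
  exact smul_right_injective H hφ h3
end

section
/- Let K be a field, H a Hopf algebra over K, and A an H-comodule algebra with structure map ρ : A → A⊗H and coinvariant subalgebra B := {a ∈ A | ρ(a) = a⊗1}. Let Z be a subalgebra of the center of A which is an H-subcomodule (ρ(Z) ⊆ Z⊗H), and set Z' := Z ∩ B. If the canonical map β_Z : Z ⊗_{Z'} Z → Z⊗H, β_Z(a ⊗ x) = ∑ a·x₍0₎ ⊗ x₍1₎, is surjective, then the canonical Galois map β_A : A ⊗_B A → A⊗H, β_A(a ⊗ x) = ∑ a·x₍0₎ ⊗ x₍1₎, is surjective. -/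
/-!
STATEMENT 17: Let `A` be an `H`-comodule algebra with coinvariants `B`, and
`Z ⊆ Z(A)` a central subalgebra which is an `H`-subcomodule, `Z' = Z ∩ B`.  If the
canonical map `β_Z : Z ⊗_{Z'} Z → Z ⊗ H` is surjective, then the canonical Galois
map `β_A : A ⊗_B A → A ⊗ H` is surjective.

Since surjectivity of `β_Z` (resp. `β_A`) is unaffected by passing from
`Z ⊗_K Z` to the quotient `Z ⊗_{Z'} Z` (resp. from `A ⊗_K A` to `A ⊗_B A`), it is
expressed here via the `K`-linear maps with the same formula `a ⊗ x ↦ (a⊗1)·ρ(x)`: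
`β_Z` is surjective iff the image of `Z ⊗ H` in `A ⊗ H` is contained in the range
of that map.
-/

open TensorProduct

theorem galois_map_surjective_of_centrally_surjective
    (K H A : Type*) [Field K] [Ring H] [HopfAlgebra K H] [Ring A] [Algebra K A]
    (ρ : A →ₐ[K] A ⊗[K] H)
    (h_coassoc : (TensorProduct.assoc K A H H).toLinearMap ∘ₗ
        TensorProduct.map ρ.toLinearMap (LinearMap.id (M := H)) ∘ₗ ρ.toLinearMap =
      TensorProduct.map (LinearMap.id (M := A)) (Coalgebra.comul (R := K)) ∘ₗ ρ.toLinearMap)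
    (h_counit : (TensorProduct.rid K A).toLinearMap ∘ₗ
        TensorProduct.map (LinearMap.id (M := A)) (Coalgebra.counit (R := K)) ∘ₗ
          ρ.toLinearMap = LinearMap.id)
    (B : Subalgebra K A) (hB : ∀ a : A, a ∈ B ↔ ρ a = a ⊗ₜ[K] (1 : H))
    (Z : Subalgebra K A) (hZcentral : Z ≤ Subalgebra.center K A)
    (hZsub : ∀ z ∈ Z, ρ z ∈
      LinearMap.range (TensorProduct.map (Subalgebra.toSubmodule Z).subtype
        (LinearMap.id (M := H))))
    (βZ : ↥Z ⊗[K] ↥Z →ₗ[K] A ⊗[K] H)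
    (hβZ : ∀ a x : ↥Z, βZ (a ⊗ₜ[K] x) = ((a : A) ⊗ₜ[K] (1 : H)) * ρ (x : A))
    (hβZsurj : LinearMap.range (TensorProduct.map (Subalgebra.toSubmodule Z).subtype
        (LinearMap.id (M := H))) ≤ LinearMap.range βZ)
    (βA : A ⊗[K] A →ₗ[K] A ⊗[K] H)
    (hβA : ∀ a x : A, βA (a ⊗ₜ[K] x) = (a ⊗ₜ[K] (1 : H)) * ρ x) :
    Function.Surjective βA := by
  have key : ∀ (a : A) (h : H), a ⊗ₜ[K] h ∈ LinearMap.range βA := by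
    intro a h
    have h1 : (1 : A) ⊗ₜ[K] h ∈ LinearMap.range βZ := by
      apply hβZsurj
      exact ⟨(1 : Z) ⊗ₜ[K] h, by simp⟩
    obtain ⟨t, ht⟩ := h1
    have hmul : ∀ t : ↥Z ⊗[K] ↥Z,
        (a ⊗ₜ[K] (1 : H)) * βZ t ∈ LinearMap.range βA := by
      intro t
      induction t using TensorProduct.induction_on with
      | zero =>
        rw [LinearMap.map_zero, mul_zero]
        exact zero_mem _
      | tmul z w =>
        refine ⟨(a * (z : A)) ⊗ₜ[K] (w : A), ?_⟩
        rw [hβA, hβZ, ← mul_assoc, Algebra.TensorProduct.tmul_mul_tmul, mul_one]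
      | add x y hx hy =>
        rw [map_add, mul_add]
        exact Submodule.add_mem _ hx hy
    have h2 := hmul t
    rw [ht, Algebra.TensorProduct.tmul_mul_tmul, mul_one, one_mul] at h2
    exact h2
  intro y
  induction y using TensorProduct.induction_on with
  | zero => exact ⟨0, map_zero _⟩
  | tmul a h => exact key a h
  | add x y hx hy =>
    obtain ⟨u, hu⟩ := hx
    obtain ⟨v, hv⟩ := hy
    exact ⟨u + v, by rw [map_add, hu, hv]⟩
end

section
/- Let K be a field and H a Hopf algebra over K with antipode S satisfying S∘S = id_H. Let π : H → H/[H,H] be the quotient map onto the quotient by the linear span of commutators. Then for every cocommutative element r ∈ R_H and all elements x, h ∈ H, the following identity holds in H ⊗ (H/[H,H]): ∑ r₍₂₎h₍₂₎ ⊗ π( x · S(h₍₁₎) · S(r₍₁₎) · r₍₃₎ · h₍₃₎ ) = ∑ r·h₍₂₎ ⊗ π( x · S(h₍₁₎) · h₍₃₎ ). -/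
/-!
STATEMENT 18: Let `H` be a Hopf algebra over a field `K` with involutive antipode
`S`, and let `π : H → H/[H,H]` be the quotient by the span of commutators.  For
every cocommutative `r ∈ R_H` and all `x, h ∈ H` (with Sweedler representations
`(Δ⊗id)(Δ r) = ∑ᵢ r₁ᵢ⊗r₂ᵢ⊗r₃ᵢ` and `(Δ⊗id)(Δ h) = ∑ⱼ h₁ⱼ⊗h₂ⱼ⊗h₃ⱼ`), one has in
`H ⊗ (H/[H,H])`:
`∑ r₍₂₎h₍₂₎ ⊗ π(x·S(h₍₁₎)·S(r₍₁₎)·r₍₃₎·h₍₃₎) = ∑ r·h₍₂₎ ⊗ π(x·S(h₍₁₎)·h₍₃₎)`.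
-/

open TensorProduct

section Aux
variable {K H : Type*} [CommSemiring K] [Semiring H] [HopfAlgebra K H]

local notation "Sa" => HopfAlgebra.antipode (R := K) (A := H)
local notation "ε" => Coalgebra.counit (R := K) (A := H)

lemma counit_smul_left_sum {ιρ : Type*} (z : H) (ρ : Coalgebra.Repr K z ιρ) :
    ∑ i ∈ ρ.index, ε (ρ.left i) • ρ.right i = z := by
  have h := Coalgebra.sum_counit_tmul_eq (R := K) ρ
  have h2 := congrArg (TensorProduct.lid K H) h
  simp only [map_sum, lid_tmul, one_smul] at h2
  exact h2

lemma counit_smul_right_sum {ιρ : Type*} (z : H) (ρ : Coalgebra.Repr K z ιρ) :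
    ∑ i ∈ ρ.index, ε (ρ.right i) • ρ.left i = z := by
  have h := Coalgebra.sum_tmul_counit_eq (R := K) ρ
  have h2 := congrArg (TensorProduct.rid K H) h
  simp only [map_sum, rid_tmul, one_smul] at h2
  exact h2

lemma antipode_one' : Sa (1 : H) = 1 := by
  have := HopfAlgebra.mul_antipode_rTensor_comul_apply (R := K) (A := H) 1
  simp only [Bialgebra.comul_one, Algebra.TensorProduct.one_def, LinearMap.rTensor_tmul,
    LinearMap.mul'_apply, mul_one, Bialgebra.counit_one, map_one] at this
  exact this

lemma dagger {ιρ : Type*} (z : H) (ρ : Coalgebra.Repr K z ιρ)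
    (ν : ∀ i : ιρ, Coalgebra.Repr K (ρ.left i) (H × H)) :
    ∑ i ∈ ρ.index, ∑ k ∈ (ν i).index,
      (ν i).left k ⊗ₜ[K] ((ν i).right k * Sa (ρ.right i)) = z ⊗ₜ[K] 1 := by
  have h := Coalgebra.sum_tmul_tmul_eq (R := K) ρ ν
    (fun i => Coalgebra.Repr.arbitrary K (ρ.right i))
  have h2 := congrArg (LinearMap.lTensor H (LinearMap.mul' K H ∘ₗ LinearMap.lTensor H Sa)) h
  simp only [map_sum, LinearMap.lTensor_tmul, LinearMap.coe_comp, Function.comp_apply,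
    LinearMap.mul'_apply] at h2
  rw [h2]
  have inner : ∀ i ∈ ρ.index,
      ∑ m ∈ (Coalgebra.Repr.arbitrary K (ρ.right i)).index,
        ρ.left i ⊗ₜ[K] ((Coalgebra.Repr.arbitrary K (ρ.right i)).left m *
          Sa ((Coalgebra.Repr.arbitrary K (ρ.right i)).right m)) =
      ε (ρ.right i) • (ρ.left i ⊗ₜ[K] (1 : H)) := by
    intro i _
    rw [← tmul_sum, HopfAlgebra.sum_mul_antipode_eq_smul, tmul_smul]
  rw [Finset.sum_congr rfl inner]
  simp only [smul_tmul']
  rw [← sum_tmul, counit_smul_right_sum]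

lemma antipode_mul_aux {ια ιβ : Type*} (a b : H) (α : Coalgebra.Repr K a ια)
    (β : Coalgebra.Repr K b ιβ)
    (αα : ∀ i : ια, Coalgebra.Repr K (α.left i) (H × H))
    (ββ : ∀ j : ιβ, Coalgebra.Repr K (β.left j) (H × H)) :
    Sa (a * b) = Sa b * Sa a := by
  have claim1 :
      ∑ i ∈ α.index, ∑ k ∈ (αα i).index, ∑ j ∈ β.index, ∑ l ∈ (ββ j).index,
        Sa ((αα i).left k * (ββ j).left l) *
          ((αα i).right k * ((ββ j).right l * (Sa (β.right j) * Sa (α.right i)))) =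
      Sa (a * b) := by
    have step1 : ∀ i k,
        ∑ j ∈ β.index, ∑ l ∈ (ββ j).index,
          Sa ((αα i).left k * (ββ j).left l) *
            ((αα i).right k * ((ββ j).right l * (Sa (β.right j) * Sa (α.right i)))) =
        Sa ((αα i).left k * b) * ((αα i).right k * Sa (α.right i)) := by
      intro i k
      have h2 := congrArg (LinearMap.mul' K H ∘ₗ TensorProduct.map
        (Sa ∘ₗ LinearMap.mulLeft K ((αα i).left k))
        (LinearMap.mulLeft K ((αα i).right k) ∘ₗ LinearMap.mulRight K (Sa (α.right i))))
        (dagger b β ββ)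
      simpa [map_sum, mul_assoc] using h2
    rw [Finset.sum_congr rfl fun i _ => Finset.sum_congr rfl fun k _ => step1 i k]
    have h3 := congrArg (LinearMap.mul' K H ∘ₗ TensorProduct.map
      (Sa ∘ₗ LinearMap.mulRight K b) (LinearMap.id (M := H))) (dagger a α αα)
    simpa [map_sum, mul_assoc] using h3
  rw [← claim1]
  -- now prove the big sum equals Sa b * Sa a
  have key : ∀ i ∈ α.index, ∀ j ∈ β.index,
      ∑ k ∈ (αα i).index, ∑ l ∈ (ββ j).index,
        Sa ((αα i).left k * (ββ j).left l) *
          ((αα i).right k * ((ββ j).right l * (Sa (β.right j) * Sa (α.right i)))) =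
      (ε (α.left i) * ε (β.left j)) • (Sa (β.right j) * Sa (α.right i)) := by
    intro i _ j _
    set w := Sa (β.right j) * Sa (α.right i) with hw
    have hπ : ∑ p ∈ (αα i).index ×ˢ (ββ j).index,
        ((αα i).left p.1 * (ββ j).left p.2) ⊗ₜ[K] ((αα i).right p.1 * (ββ j).right p.2) =
        CoalgebraStruct.comul (R := K) (α.left i * β.left j) := by
      rw [Finset.sum_product]
      rw [show CoalgebraStruct.comul (R := K) (α.left i * β.left j) =
        CoalgebraStruct.comul (R := K) (α.left i) *
          CoalgebraStruct.comul (R := K) (β.left j) from Bialgebra.comul_mul _ _,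
        ← (αα i).eq, ← (ββ j).eq, Finset.sum_mul_sum]
      simp [Algebra.TensorProduct.tmul_mul_tmul]
    have h4 : ∑ p ∈ (αα i).index ×ˢ (ββ j).index,
        Sa ((αα i).left p.1 * (ββ j).left p.2) * ((αα i).right p.1 * (ββ j).right p.2) =
        ε (α.left i * β.left j) • (1 : H) :=
      HopfAlgebra.sum_antipode_mul_eq_smul (R := K)
        ⟨(αα i).index ×ˢ (ββ j).index, fun p => (αα i).left p.1 * (ββ j).left p.2,
          fun p => (αα i).right p.1 * (ββ j).right p.2, hπ⟩
    have h5 := congrArg (fun z => z * w) h4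
    simp only [Finset.sum_mul, smul_mul_assoc, one_mul] at h5
    rw [Finset.sum_product] at h5
    calc ∑ k ∈ (αα i).index, ∑ l ∈ (ββ j).index,
          Sa ((αα i).left k * (ββ j).left l) *
            ((αα i).right k * ((ββ j).right l * w)) =
        ∑ k ∈ (αα i).index, ∑ l ∈ (ββ j).index,
          Sa ((αα i).left k * (ββ j).left l) *
            ((αα i).right k * (ββ j).right l) * w := by
          simp only [mul_assoc]
      _ = ε (α.left i * β.left j) • w := h5
      _ = (ε (α.left i) * ε (β.left j)) • w := by rw [Bialgebra.counit_mul]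
  calc ∑ i ∈ α.index, ∑ k ∈ (αα i).index, ∑ j ∈ β.index, ∑ l ∈ (ββ j).index,
        Sa ((αα i).left k * (ββ j).left l) *
          ((αα i).right k * ((ββ j).right l * (Sa (β.right j) * Sa (α.right i))))
      = ∑ i ∈ α.index, ∑ j ∈ β.index, ∑ k ∈ (αα i).index, ∑ l ∈ (ββ j).index,
        Sa ((αα i).left k * (ββ j).left l) *
          ((αα i).right k * ((ββ j).right l * (Sa (β.right j) * Sa (α.right i)))) :=
      Finset.sum_congr rfl fun i _ => Finset.sum_comm
    _ = ∑ i ∈ α.index, ∑ j ∈ β.index,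
          (ε (α.left i) * ε (β.left j)) • (Sa (β.right j) * Sa (α.right i)) :=
      Finset.sum_congr rfl fun i hi => Finset.sum_congr rfl fun j hj => key i hi j hj
    _ = Sa b * Sa a := by
      have hsb : Sa b = ∑ j ∈ β.index, ε (β.left j) • Sa (β.right j) := by
        conv_lhs => rw [← counit_smul_left_sum b β]
        simp [map_sum]
      have hsa : Sa a = ∑ i ∈ α.index, ε (α.left i) • Sa (α.right i) := by
        conv_lhs => rw [← counit_smul_left_sum a α]
        simp [map_sum]
      rw [hsb, hsa, Finset.sum_mul_sum]
      rw [Finset.sum_comm]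
      exact Finset.sum_congr rfl fun j _ => Finset.sum_congr rfl fun i _ => by
        rw [smul_mul_smul_comm, mul_comm (ε (β.left j))]

lemma antipode_mul' (a b : H) : Sa (a * b) = Sa b * Sa a :=
  antipode_mul_aux a b (Coalgebra.Repr.arbitrary K a) (Coalgebra.Repr.arbitrary K b)
    (fun i => Coalgebra.Repr.arbitrary K _) (fun j => Coalgebra.Repr.arbitrary K _)

end Aux


theorem cocommutative_sweedler_identity_in_commutator_quotient
    (K H : Type*) [Field K] [Ring H] [HopfAlgebra K H]
    (hS : HopfAlgebra.antipode (R := K) (A := H) ∘ₗ HopfAlgebra.antipode (R := K) (A := H) =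
      LinearMap.id)
    (r : H)
    (hr : Coalgebra.comul (R := K) r = TensorProduct.comm K H H (Coalgebra.comul (R := K) r))
    (x h : H)
    (ι κ : Type*) (s : Finset ι) (t : Finset κ)
    (r1 r2 r3 : ι → H) (h1 h2 h3 : κ → H)
    (hΔr : TensorProduct.map (Coalgebra.comul (R := K)) (LinearMap.id (M := H))
        (Coalgebra.comul (R := K) r) = ∑ i ∈ s, (r1 i ⊗ₜ[K] r2 i) ⊗ₜ[K] r3 i)
    (hΔh : TensorProduct.map (Coalgebra.comul (R := K)) (LinearMap.id (M := H))
        (Coalgebra.comul (R := K) h) = ∑ j ∈ t, (h1 j ⊗ₜ[K] h2 j) ⊗ₜ[K] h3 j) :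
    let C : Submodule K H := Submodule.span K {z : H | ∃ a b : H, z = a * b - b * a}
    ∑ i ∈ s, ∑ j ∈ t,
        (r2 i * h2 j) ⊗ₜ[K]
          C.mkQ (x * HopfAlgebra.antipode (R := K) (h1 j) *
            HopfAlgebra.antipode (R := K) (r1 i) * r3 i * h3 j) =
      ∑ j ∈ t, (r * h2 j) ⊗ₜ[K] C.mkQ (x * HopfAlgebra.antipode (R := K) (h1 j) * h3 j) := by
  intro C
  set Sa := HopfAlgebra.antipode (R := K) (A := H) with hSa
  have hSS : ∀ z : H, Sa (Sa z) = z := fun z => by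
    have := LinearMap.congr_fun hS z
    simpa using this
  have ρ := Coalgebra.Repr.arbitrary K r
  have ν : ∀ i : H × H, Coalgebra.Repr K (ρ.left i) (H × H) :=
    fun i => Coalgebra.Repr.arbitrary K (ρ.left i)
  have μ : ∀ i : H × H, Coalgebra.Repr K (ρ.right i) (H × H) :=
    fun i => Coalgebra.Repr.arbitrary K (ρ.right i)
  have hswap : ∑ i ∈ ρ.index, ρ.right i ⊗ₜ[K] ρ.left i =
      CoalgebraStruct.comul (R := K) r := by
    rw [show CoalgebraStruct.comul (R := K) r =
      TensorProduct.comm K H H (Coalgebra.comul (R := K) r) from hr, ← ρ.eq]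
    simp [map_sum]
  -- coassociativity applied to the swapped representation
  have hco : ∑ i ∈ ρ.index, ∑ m ∈ (μ i).index,
        (μ i).left m ⊗ₜ[K] ((μ i).right m ⊗ₜ[K] ρ.left i) =
      ∑ i ∈ ρ.index, ∑ k ∈ (ν i).index,
        ρ.right i ⊗ₜ[K] ((ν i).left k ⊗ₜ[K] (ν i).right k) :=
    Coalgebra.sum_tmul_tmul_eq (R := K) ⟨ρ.index, ρ.right, ρ.left, hswap⟩
      (fun i => μ i) (fun i => ν i)
  have key1 : ∑ i ∈ ρ.index, ∑ k ∈ (ν i).index,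
      (ν i).right k ⊗ₜ[K] (Sa (ρ.right i) * (ν i).left k) = r ⊗ₜ[K] (1 : H) := by
    have h2 := congrArg (LinearMap.lTensor H (LinearMap.mul' K H ∘ₗ LinearMap.rTensor H Sa) ∘ₗ
      (TensorProduct.comm K (H ⊗[K] H) H).toLinearMap ∘ₗ
      (TensorProduct.assoc K H H H).symm.toLinearMap) hco
    simp only [map_sum, LinearMap.coe_comp, Function.comp_apply, LinearEquiv.coe_coe,
      assoc_symm_tmul, comm_tmul, LinearMap.lTensor_tmul, LinearMap.rTensor_tmul,
      LinearMap.mul'_apply] at h2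
    rw [← h2]
    have inner : ∀ i ∈ ρ.index,
        ∑ m ∈ (μ i).index, ρ.left i ⊗ₜ[K] (Sa ((μ i).left m) * (μ i).right m) =
        Coalgebra.counit (R := K) (ρ.right i) • (ρ.left i ⊗ₜ[K] (1 : H)) := by
      intro i _
      rw [← tmul_sum, HopfAlgebra.sum_antipode_mul_eq_smul, tmul_smul]
    rw [Finset.sum_congr rfl inner]
    simp only [smul_tmul']
    rw [← sum_tmul, counit_smul_right_sum]
  -- representation of the triple comultiplication of r
  have hrep : ∑ i ∈ s, (r1 i ⊗ₜ[K] r2 i) ⊗ₜ[K] r3 i =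
      ∑ i ∈ ρ.index, ∑ k ∈ (ν i).index,
        ((ν i).left k ⊗ₜ[K] (ν i).right k) ⊗ₜ[K] ρ.right i := by
    rw [← hΔr, show Coalgebra.comul (R := K) r = ∑ i ∈ ρ.index, ρ.left i ⊗ₜ[K] ρ.right i
      from ρ.eq.symm]
    simp only [map_sum, TensorProduct.map_tmul, LinearMap.id_coe, id_eq]
    refine Finset.sum_congr rfl fun i _ => ?_
    rw [show Coalgebra.comul (R := K) (ρ.left i) =
      ∑ k ∈ (ν i).index, (ν i).left k ⊗ₜ[K] (ν i).right k from (ν i).eq.symm, sum_tmul]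
  have E1 : ∑ i ∈ s, r2 i ⊗ₜ[K] (Sa (r1 i) * r3 i) = r ⊗ₜ[K] (1 : H) := by
    have h2 := congrArg (LinearMap.lTensor H (LinearMap.mul' K H) ∘ₗ
      (TensorProduct.assoc K H H H).toLinearMap ∘ₗ
      LinearMap.rTensor H ((TensorProduct.comm K H H).toLinearMap ∘ₗ LinearMap.rTensor H Sa))
      hrep
    simp only [map_sum, LinearMap.coe_comp, Function.comp_apply, LinearEquiv.coe_coe,
      LinearMap.rTensor_tmul, comm_tmul, assoc_tmul, LinearMap.lTensor_tmul,
      LinearMap.mul'_apply] at h2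
    rw [h2]
    have inner : ∀ i ∈ ρ.index, ∀ k ∈ (ν i).index,
        (ν i).right k ⊗ₜ[K] (Sa ((ν i).left k) * ρ.right i) =
        (ν i).right k ⊗ₜ[K] (Sa (Sa (ρ.right i) * (ν i).left k)) := by
      intro i _ k _
      rw [antipode_mul', hSS]
    rw [Finset.sum_congr rfl fun i hi => Finset.sum_congr rfl fun k hk => inner i hi k hk]
    have h3 := congrArg (LinearMap.lTensor H Sa) key1
    simp only [map_sum, LinearMap.lTensor_tmul] at h3
    rw [h3, hSa, antipode_one']
  rw [Finset.sum_comm]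
  refine Finset.sum_congr rfl fun j _ => ?_
  have h4 := congrArg (TensorProduct.map (LinearMap.mulRight K (h2 j))
    (C.mkQ ∘ₗ LinearMap.mulRight K (h3 j) ∘ₗ LinearMap.mulLeft K (x * Sa (h1 j)))) E1
  simp only [map_sum, TensorProduct.map_tmul, LinearMap.mulRight_apply,
    LinearMap.coe_comp, Function.comp_apply, LinearMap.mulLeft_apply, mul_one] at h4
  calc ∑ i ∈ s, (r2 i * h2 j) ⊗ₜ[K]
        C.mkQ (x * Sa (h1 j) * Sa (r1 i) * r3 i * h3 j)
      = ∑ i ∈ s, (r2 i * h2 j) ⊗ₜ[K]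
        C.mkQ (x * Sa (h1 j) * (Sa (r1 i) * r3 i) * h3 j) := by
        refine Finset.sum_congr rfl fun i _ => ?_
        rw [mul_assoc (x * Sa (h1 j))]
    _ = (r * h2 j) ⊗ₜ[K] C.mkQ (x * Sa (h1 j) * h3 j) := h4
end
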